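/- For every c.e. subset A of ℕ, there exists a generating set for D(A) that is of Type n for some n with 1 ≤ n ≤ 10. -/

import Mathlib

open Set Function

/-- A set of naturals is computably enumerable (c.e.) -/
def CESet (A : Set ℕ) : Prop := REPred (· ∈ A)

/-- A set of naturals is computable -/
def ComputableSet (A : Set ℕ) : Prop := ComputablePred (· ∈ A)

/-- X ⊆* Y : X is almost contained in Y -/
def SubsetStar (X Y : Set ℕ) : Prop := (X \ Y).Finite

/-- X =* Y : X and Y differ by a finite set -/
def EqStar (X Y : Set ℕ) : Prop := (X \ Y).Finite ∧ (Y \ X).Finite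

/-- G is a generating set for 𝒟(A): a countable family of c.e. sets, each disjoint
from A, such that every c.e. set disjoint from A is almost covered by finitely many
members of G. -/
def Generates (A : Set ℕ) (G : Set (Set ℕ)) : Prop :=
  G.Countable ∧ (∀ X ∈ G, CESet X) ∧ (∀ X ∈ G, Disjoint X A) ∧
  ∀ D : Set ℕ, CESet D → Disjoint D A →
    ∃ F : Set (Set ℕ), F ⊆ G ∧ F.Finite ∧ SubsetStar D (⋃₀ F)

/-- S is simple -/
def SimpleSet (S : Set ℕ) : Prop :=
  CESet S ∧ Sᶜ.Infinite ∧ ∀ W : Set ℕ, CESet W → Disjoint W S → W.Finite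

/-- A is 𝒟-maximal -/
def DMaximal (A : Set ℕ) : Prop :=
  CESet A ∧ ∀ W : Set ℕ, CESet W → ∃ D : Set ℕ, CESet D ∧ Disjoint D A ∧
    (SubsetStar W (A ∪ D) ∨ EqStar (W ∪ A ∪ D) Set.univ)

/-- M is r-maximal -/
def RMaximal (M : Set ℕ) : Prop :=
  CESet M ∧ Mᶜ.Infinite ∧
    ∀ R : Set ℕ, ComputableSet R → (R ∩ Mᶜ).Finite ∨ (Rᶜ ∩ Mᶜ).Finite

/-- M is maximal -/
def MaximalSet (M : Set ℕ) : Prop :=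
  CESet M ∧ Mᶜ.Infinite ∧
    ∀ W : Set ℕ, CESet W → M ⊆ W → (W \ M).Finite ∨ Wᶜ.Finite

/-- B is atomless -/
def AtomlessSet (B : Set ℕ) : Prop :=
  ∀ C : Set ℕ, CESet C → B ⊆ C → Cᶜ.Infinite →
    ∃ E : Set ℕ, CESet E ∧ SubsetStar C E ∧ (E \ C).Infinite ∧ Eᶜ.Infinite

/-- A0, A1 form a Friedberg splitting of A -/
def FriedbergSplitting (A0 A1 A : Set ℕ) : Prop :=
  CESet A0 ∧ CESet A1 ∧ Disjoint A0 A1 ∧ A0 ∪ A1 = A ∧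
    ∀ W : Set ℕ, CESet W → ¬ CESet (W \ A) → ¬ CESet (W \ A0) ∧ ¬ CESet (W \ A1)

/-- E is a major subset of D -/
def MajorIn (E D : Set ℕ) : Prop :=
  CESet E ∧ CESet D ∧ E ⊆ D ∧ (D \ E).Infinite ∧
    ∀ W : Set ℕ, CESet W → SubsetStar Dᶜ W → SubsetStar Eᶜ W

/-- H is hh-simple: the lattice of c.e. supersets of H mod finite is a boolean algebra -/
def HHSimple (H : Set ℕ) : Prop :=
  CESet H ∧ Hᶜ.Infinite ∧
    ∀ W : Set ℕ, CESet W → ∃ V : Set ℕ, CESet V ∧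
      EqStar ((W ∪ H) ∩ (V ∪ H)) H ∧ EqStar (W ∪ V ∪ H) Set.univ

/-- A is strongly r-separable -/
def StronglyRSeparable (A : Set ℕ) : Prop :=
  ∀ B : Set ℕ, CESet B → Disjoint B A →
    ∃ C : Set ℕ, ComputableSet C ∧ B ⊆ C ∧ Disjoint C A ∧ (C \ B).Infinite

/-- Structure of a Type 5 generating family: D0 together with the R_i. -/
def Type5Family (D0 : Set ℕ) (R : ℕ → Set ℕ) : Prop :=
  CESet D0 ∧ ¬ ComputableSet D0 ∧ D0.Infinite ∧
  Function.Injective R ∧ (∀ i, D0 ≠ R i) ∧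
  (∀ i, ComputableSet (R i) ∧ (R i).Infinite) ∧
  Pairwise (Function.onFun Disjoint R) ∧
  (∀ i, Disjoint D0 (R i))

/-- Structure of a Type 7 generating family: D0 together with the R_i. -/
def Type7Family (D0 : Set ℕ) (R : ℕ → Set ℕ) : Prop :=
  CESet D0 ∧ ¬ ComputableSet D0 ∧
  Function.Injective R ∧ (∀ i, D0 ≠ R i) ∧
  (∀ i, ComputableSet (R i) ∧ (R i).Infinite) ∧
  Pairwise (Function.onFun Disjoint R) ∧
  {i : ℕ | (D0 ∩ R i).Nonempty}.Infinite

/-- Structure of a Type 8 generating family: the D_i together with the R_i. -/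
def Type8Family (D R : ℕ → Set ℕ) : Prop :=
  Function.Injective D ∧ Function.Injective R ∧ (∀ i j, D i ≠ R j) ∧
  (∀ i, CESet (D i) ∧ ¬ ComputableSet (D i)) ∧
  Pairwise (Function.onFun Disjoint D) ∧
  (∀ i, ComputableSet (R i) ∧ (R i).Infinite) ∧
  Pairwise (Function.onFun Disjoint R)

/-- Structure of a Type 9 generating family: the nested D_i together with the R_i. -/
def Type9Family (D R : ℕ → Set ℕ) : Prop :=
  Function.Injective R ∧ (∀ i j, D i ≠ R j) ∧
  (∀ i, ComputableSet (R i) ∧ (R i).Infinite) ∧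
  Pairwise (Function.onFun Disjoint R) ∧
  (∀ i, CESet (D i) ∧ ¬ ComputableSet (D i) ∧ (D i).Infinite) ∧
  (∀ l, D l ⊆ D (l + 1)) ∧
  (∀ l, ¬ CESet (D (l + 1) \ D l)) ∧
  (∀ l, {j : ℕ | (R j \ D l).Infinite}.Infinite)

def IsType1 (G : Set (Set ℕ)) : Prop := G = {∅}

def IsType2 (G : Set (Set ℕ)) : Prop :=
  ∃ R : Set ℕ, G = {R} ∧ ComputableSet R ∧ R.Infinite

def IsType3 (G : Set (Set ℕ)) : Prop :=
  ∃ W : Set ℕ, G = {W} ∧ CESet W ∧ ¬ ComputableSet W ∧ W.Infinite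

def IsType4 (G : Set (Set ℕ)) : Prop :=
  ∃ R : ℕ → Set ℕ, G = Set.range R ∧ Function.Injective R ∧
    (∀ i, ComputableSet (R i) ∧ (R i).Infinite) ∧
    Pairwise (Function.onFun Disjoint R)

def IsType5 (G : Set (Set ℕ)) : Prop :=
  ∃ (D0 : Set ℕ) (R : ℕ → Set ℕ), G = insert D0 (Set.range R) ∧ Type5Family D0 R

def IsType6 (G : Set (Set ℕ)) : Prop :=
  ∃ D : ℕ → Set ℕ, G = Set.range D ∧ Function.Injective D ∧
    (∀ i, CESet (D i) ∧ ¬ ComputableSet (D i) ∧ (D i).Infinite) ∧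
    Pairwise (Function.onFun Disjoint D)

def IsType7 (G : Set (Set ℕ)) : Prop :=
  ∃ (D0 : Set ℕ) (R : ℕ → Set ℕ), G = insert D0 (Set.range R) ∧ Type7Family D0 R

def IsType8 (G : Set (Set ℕ)) : Prop :=
  ∃ D R : ℕ → Set ℕ, G = Set.range D ∪ Set.range R ∧ Type8Family D R

def IsType9 (G : Set (Set ℕ)) : Prop :=
  ∃ D R : ℕ → Set ℕ, G = Set.range D ∪ Set.range R ∧ Type9Family D R

def IsType10 (G : Set (Set ℕ)) : Prop :=
  ∃ D : ℕ → Set ℕ, G = Set.range D ∧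
    (∀ i, CESet (D i) ∧ ¬ ComputableSet (D i) ∧ (D i).Infinite) ∧
    (∀ l, D l ⊆ D (l + 1)) ∧
    (∀ l, ¬ CESet (D (l + 1) \ D l))

/-- G is a generating set of Type n (n = 1, …, 10). -/
def GenTypeN (n : ℕ) (G : Set (Set ℕ)) : Prop :=
  match n with
  | 1 => IsType1 G
  | 2 => IsType2 G
  | 3 => IsType3 G
  | 4 => IsType4 G
  | 5 => IsType5 G
  | 6 => IsType6 G
  | 7 => IsType7 G
  | 8 => IsType8 G
  | 9 => IsType9 G
  | 10 => IsType10 G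
  | _ => False

/-- The c.e. set A is of Type n: 𝒟(A) has a generating set of Type n
but no generating set of any Type m < n. -/
def SetOfType (A : Set ℕ) (n : ℕ) : Prop :=
  (∃ G : Set (Set ℕ), Generates A G ∧ GenTypeN n G) ∧
  ∀ m : ℕ, m < n → ¬ ∃ G : Set (Set ℕ), Generates A G ∧ GenTypeN m G

/-- (F_i) is an A-special list. -/
def ASpecialList (A : Set ℕ) (F : ℕ → Set ℕ) : Prop :=
  F 0 = A ∧ (∀ i, CESet (F i) ∧ ¬ ComputableSet (F i)) ∧
  Pairwise (Function.onFun Disjoint F) ∧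
  ∀ W : Set ℕ, CESet W → ∃ i : ℕ,
    SubsetStar W (⋃ l ≤ i, F l) ∨ EqStar (W ∪ ⋃ l ≤ i, F l) Set.univ


/-!
Write `𝒟(A)` for the c.e. sets disjoint from `A`. If some `M ∈ 𝒟(A)` almost contains every
member of `𝒟(A)`, then `{M}` (or `{∅}`, when `M` is finite) generates: Types 1–3. Otherwise every
generating family has infinitely many infinite members, and its finite members may be dropped.

If some `X ∈ 𝒟(A)` covers `𝒟(A)` up to computable members of `𝒟(A)`, enumerating `𝒟(A)` and
disjointifying the computable witnesses gives pairwise disjoint computable `R i` such that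
`{X} ∪ {R i}` generates. This is Type 4 if `X` can be chosen computable; otherwise it is Type 7 if
`X` meets infinitely many `R i`, and Type 5 once the finitely many `R i` it meets are merged into
`X` (the merged set still covers, hence is not computable).

If no such `X` exists but some `B ∈ 𝒟(A)` is such that each of its supersets in `𝒟(A)` covers
`𝒟(A)` up to a disjoint member of `𝒟(A)`, a greedy construction yields pairwise disjoint c.e.
pieces which, with `B`, generate. Infinitely many pieces are noncomputable (else `B` together with
them would cover up to computable sets), and merging `B` and the finitely many computable pieces
into them gives Type 6 or Type 8. In the remaining case every member of `𝒟(A)` lies below one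
that does not cover in this way, and iterating gives a chain `D 0 ⊆ D 1 ⊆ ⋯` in which each
`D (l + 1)` contains a witness against `D l`, so `D (l + 1) \ D l` is never c.e.: Type 10.
-/

namespace ComputableSet

variable {X Y : Set ℕ}

theorem ceSet (hX : ComputableSet X) : CESet X := ComputablePred.to_re hX

theorem compl (hX : ComputableSet X) : ComputableSet Xᶜ := ComputablePred.not hX

theorem inter (hX : ComputableSet X) (hY : ComputableSet Y) : ComputableSet (X ∩ Y) := by
  obtain ⟨f, hf, hfX⟩ := ComputablePred.computable_iff.1 hX
  obtain ⟨g, hg, hgY⟩ := ComputablePred.computable_iff.1 hY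
  refine ComputablePred.computable_iff.2 ⟨fun n => f n && g n, Primrec.and.to_comp.comp hf hg, ?_⟩
  funext n
  simp [mem_inter_iff, congrFun hfX n, congrFun hgY n]

theorem union (hX : ComputableSet X) (hY : ComputableSet Y) : ComputableSet (X ∪ Y) := by
  simpa only [compl_inter, compl_compl] using (hX.compl.inter hY.compl).compl

theorem diff (hX : ComputableSet X) (hY : ComputableSet Y) : ComputableSet (X \ Y) :=
  hX.inter hY.compl

theorem singleton (a : ℕ) : ComputableSet {a} :=
  (Primrec.eq.comp Primrec.id (Primrec.const a)).computablePred

theorem of_finite (hX : X.Finite) : ComputableSet X := by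
  induction X, hX using Set.Finite.induction_on with
  | empty => exact ComputablePred.computable_iff.2 ⟨fun _ => false, Computable.const _, by simp⟩
  | @insert a s _ _ ih => exact (singleton a).union ih

theorem sUnion {F : Set (Set ℕ)} (hF : F.Finite) (h : ∀ X ∈ F, ComputableSet X) :
    ComputableSet (⋃₀ F) := by
  induction F, hF using Set.Finite.induction_on with
  | empty => simpa using of_finite finite_empty
  | @insert Z F _ _ ih =>
    rw [sUnion_insert]
    exact (h Z (mem_insert _ _)).union (ih fun X hX => h X (mem_insert_of_mem _ hX))

end ComputableSet

theorem infinite_of_not_computableSet {X : Set ℕ} (hX : ¬ ComputableSet X) : X.Infinite :=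
  fun h => hX (ComputableSet.of_finite h)

theorem not_computableSet_union {C N : Set ℕ} (hC : ComputableSet C) (hN : ¬ ComputableSet N)
    (h : Disjoint C N) : ¬ ComputableSet (C ∪ N) := fun hCN => by
  rw [← union_sdiff_cancel_left h.le_bot] at hN
  exact hN (hCN.diff hC)

namespace CESet

variable {X Y : Set ℕ}

theorem union (hX : CESet X) (hY : CESet Y) : CESet (X ∪ Y) := by
  obtain ⟨k, hk, H⟩ := Partrec.merge' hX hY
  exact hk.dom_re.of_eq fun n => (H n).2.trans
    ⟨by rintro (⟨h, -⟩ | ⟨h, -⟩); exacts [Or.inl h, Or.inr h],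
     by rintro (h | h); exacts [Or.inl ⟨h, trivial⟩, Or.inr ⟨h, trivial⟩]⟩

theorem inter_computableSet (hX : CESet X) (hY : ComputableSet Y) : CESet (X ∩ Y) := by
  obtain ⟨f, hf, hfY⟩ := ComputablePred.computable_iff.1 hY
  refine (Partrec.cond hf hX Partrec.none).dom_re.of_eq fun n => ?_
  rw [mem_inter_iff, congrFun hfY n]
  cases f n <;> simp [Part.assert]

theorem diff_computableSet (hX : CESet X) (hY : ComputableSet Y) : CESet (X \ Y) :=
  hX.inter_computableSet hY.compl

theorem sUnion {F : Set (Set ℕ)} (hF : F.Finite) (h : ∀ X ∈ F, CESet X) : CESet (⋃₀ F) := by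
  induction F, hF using Set.Finite.induction_on with
  | empty => simpa using (ComputableSet.of_finite finite_empty).ceSet
  | @insert Z F _ _ ih =>
    rw [sUnion_insert]
    exact (h Z (mem_insert _ _)).union (ih fun X hX => h X (mem_insert_of_mem _ hX))

end CESet

theorem countable_setOf_ceSet : {X : Set ℕ | CESet X}.Countable := by
  let code (X : {X : Set ℕ // CESet X}) : {f : ℕ →. ℕ // Partrec f} :=
    ⟨fun n => (Part.assert (n ∈ X.1) fun _ => Part.some ()).map fun _ => 0,
      Partrec.map X.2 (Computable.const 0).to₂⟩
  have hcode : Injective code := fun X Y h => Subtype.ext <| Set.ext fun n => by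
    have := congrArg (fun f : {f : ℕ →. ℕ // Partrec f} => (f.1 n).Dom) h
    simpa [code, Part.assert] using this
  exact hcode.countable.to_set

section SubsetStar

variable {X Y Z : Set ℕ}

theorem subsetStar_of_subset (h : X ⊆ Y) : SubsetStar X Y := by
  simp [SubsetStar, sdiff_eq_empty.2 h]

theorem subsetStar_of_finite (hX : X.Finite) : SubsetStar X Y := hX.subset sdiff_subset

theorem SubsetStar.trans_subset (h : SubsetStar X Y) (hYZ : Y ⊆ Z) : SubsetStar X Z :=
  h.subset (sdiff_subset_sdiff_right hYZ)

theorem SubsetStar.trans (hXY : SubsetStar X Y) (hYZ : SubsetStar Y Z) : SubsetStar X Z :=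
  (hXY.union hYZ).subset (sdiff_triangle X Y Z)

theorem subsetStar_sUnion {F : Set (Set ℕ)} (hF : F.Finite) (h : ∀ X ∈ F, SubsetStar X Y) :
    SubsetStar (⋃₀ F) Y := by
  refine (hF.biUnion h).subset ?_
  rintro x ⟨⟨X, hX, hxX⟩, hxY⟩
  exact mem_biUnion hX ⟨hxX, hxY⟩

end SubsetStar

/-- The family `𝒟(A)` of the paper. -/
def disjointCE (A : Set ℕ) : Set (Set ℕ) := {D | CESet D ∧ Disjoint D A}

theorem empty_mem_disjointCE (A : Set ℕ) : ∅ ∈ disjointCE A :=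
  ⟨(ComputableSet.of_finite finite_empty).ceSet, empty_disjoint A⟩

theorem union_mem_disjointCE {A X Y : Set ℕ} (hX : X ∈ disjointCE A) (hY : Y ∈ disjointCE A) :
    X ∪ Y ∈ disjointCE A :=
  ⟨hX.1.union hY.1, disjoint_union_left.2 ⟨hX.2, hY.2⟩⟩

theorem sUnion_mem_disjointCE {A : Set ℕ} {F : Set (Set ℕ)} (hF : F.Finite) (h : F ⊆ disjointCE A) :
    ⋃₀ F ∈ disjointCE A :=
  ⟨CESet.sUnion hF fun _ hX => (h hX).1, disjoint_sUnion_left.2 fun _ hX => (h hX).2⟩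

section Generates

variable {A : Set ℕ} {G H : Set (Set ℕ)}

theorem generates_iff : Generates A G ↔ G.Countable ∧ G ⊆ disjointCE A ∧
    ∀ D ∈ disjointCE A, ∃ F ⊆ G, F.Finite ∧ SubsetStar D (⋃₀ F) := by
  simp only [Generates, disjointCE, subset_def, mem_ofPred_eq, forall_and, and_imp, and_assoc]

theorem exists_range_eq_disjointCE (A : Set ℕ) : ∃ e : ℕ → Set ℕ, range e = disjointCE A :=
  (countable_setOf_ceSet.mono fun D (hD : D ∈ disjointCE A) => hD.1).exists_eq_range
    ⟨∅, empty_mem_disjointCE A⟩ |>.imp fun _ => Eq.symm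

theorem generates_range {X : ℕ → Set ℕ} (hX : ∀ k, X k ∈ disjointCE A)
    (hcov : ∀ D ∈ disjointCE A, ∃ k, SubsetStar D (X k)) : Generates A (range X) := by
  refine generates_iff.2 ⟨countable_range X, range_subset_iff.2 hX, fun D hD => ?_⟩
  obtain ⟨k, hk⟩ := hcov D hD
  exact ⟨{X k}, singleton_subset_iff.2 (mem_range_self k), finite_singleton _, by simpa⟩

theorem Generates.of_refines (hG : Generates A G) (hH : H.Countable) (hHA : H ⊆ disjointCE A)
    (hGH : ∀ X ∈ G, ∃ F ⊆ H, F.Finite ∧ SubsetStar X (⋃₀ F)) : Generates A H := by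
  refine generates_iff.2 ⟨hH, hHA, fun D hD => ?_⟩
  obtain ⟨F, hFG, hF, hDF⟩ := (generates_iff.1 hG).2.2 D hD
  choose! E hEH hE hXE using hGH
  refine ⟨⋃ X ∈ F, E X, iUnion₂_subset fun X hX => hEH X (hFG hX),
    hF.biUnion fun X hX => hE X (hFG hX), ?_⟩
  refine hDF.trans (subsetStar_sUnion hF fun X hX => (hXE X (hFG hX)).trans_subset ?_)
  exact sUnion_mono (subset_biUnion_of_mem (u := E) hX)

theorem Generates.of_finite_or_subset (hG : Generates A G) (hH : H.Countable)
    (hHA : H ⊆ disjointCE A) (hGH : ∀ X ∈ G, X.Finite ∨ ∃ Y ∈ H, X ⊆ Y) : Generates A H := by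
  refine hG.of_refines hH hHA fun X hX => ?_
  rcases hGH X hX with hXfin | ⟨Y, hY, hXY⟩
  · exact ⟨∅, empty_subset _, finite_empty, subsetStar_of_finite hXfin⟩
  · exact ⟨{Y}, singleton_subset_iff.2 hY, finite_singleton Y, subsetStar_of_subset (by simpa)⟩

theorem Generates.singleton_sUnion (hG : Generates A G) (hfin : {X ∈ G | X.Infinite}.Finite) :
    Generates A {⋃₀ {X ∈ G | X.Infinite}} := by
  have hGA := (generates_iff.1 hG).2.1
  refine hG.of_finite_or_subset (countable_singleton _)
    (singleton_subset_iff.2 (sUnion_mem_disjointCE hfin fun X hX => hGA hX.1)) fun X hX => ?_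
  by_cases hXfin : X.Finite
  · exact Or.inl hXfin
  · exact Or.inr ⟨_, rfl, subset_sUnion_of_mem ⟨hX, hXfin⟩⟩

theorem Generates.exists_infinite_subfamily {X : Set ℕ} {Z : ℕ → Set ℕ}
    (hG : Generates A (insert X (range Z))) (hmax : ∀ M, ¬ Generates A {M}) :
    ∃ f : ℕ → ℕ, Injective f ∧ (∀ j, (Z (f j)).Infinite) ∧
      Generates A (insert X (range (Z ∘ f))) := by
  classical
  set p : ℕ → Prop := fun i => (Z i).Infinite
  have hp : {i | p i}.Infinite := by
    refine fun hfin => hmax _ (hG.singleton_sUnion (((hfin.image Z).insert X).subset ?_))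
    rintro Y ⟨rfl | ⟨i, rfl⟩, hY⟩
    exacts [mem_insert _ _, mem_insert_of_mem _ (mem_image_of_mem Z hY)]
  have hGA := (generates_iff.1 hG).2.1
  refine ⟨Nat.nth p, Nat.nth_injective hp, Nat.nth_mem_of_infinite hp,
    hG.of_finite_or_subset (((countable_range _).insert X))
      (insert_subset (hGA (mem_insert _ _)) ?_) ?_⟩
  · rintro _ ⟨j, rfl⟩
    exact hGA (mem_insert_of_mem _ (mem_range_self _))
  · rintro Y (rfl | ⟨i, rfl⟩)
    · exact Or.inr ⟨Y, mem_insert _ _, subset_rfl⟩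
    by_cases hi : p i
    · exact Or.inr ⟨Z i, mem_insert_of_mem _ ⟨Nat.count p i, by simp [Nat.nth_count hi]⟩,
        subset_rfl⟩
    · exact Or.inl (not_not.1 hi)

end Generates

def CoversComputably (A X : Set ℕ) : Prop :=
  ∀ D ∈ disjointCE A, ∃ Z ∈ disjointCE A, ComputableSet Z ∧ SubsetStar D (X ∪ Z)

def CoversDisjointly (A X : Set ℕ) : Prop :=
  ∀ D ∈ disjointCE A, ∃ Z ∈ disjointCE A, Disjoint Z X ∧ SubsetStar D (X ∪ Z)

section Covers

variable {A X : Set ℕ}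

theorem Generates.coversComputably {G : Set (Set ℕ)} (hG : Generates A G)
    (hcomp : ∀ Y ∈ G, Y ≠ X → ComputableSet Y) : CoversComputably A X := by
  obtain ⟨-, hGA, hcov⟩ := generates_iff.1 hG
  intro D hD
  obtain ⟨F, hFG, hF, hDF⟩ := hcov D hD
  refine ⟨⋃₀ (F \ {X}), sUnion_mem_disjointCE hF.sdiff fun Y hY => hGA (hFG hY.1),
    ComputableSet.sUnion hF.sdiff fun Y hY => hcomp Y (hFG hY.1) hY.2, hDF.trans_subset ?_⟩
  rintro x ⟨Y, hYF, hxY⟩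
  by_cases hYX : Y = X
  · exact Or.inl (hYX ▸ hxY)
  · exact Or.inr ⟨Y, ⟨hYF, hYX⟩, hxY⟩

theorem CoversComputably.empty_of_computableSet (h : CoversComputably A X)
    (hX : X ∈ disjointCE A) (hXc : ComputableSet X) : CoversComputably A ∅ := by
  intro D hD
  obtain ⟨Z, hZ, hZc, hDZ⟩ := h D hD
  exact ⟨X ∪ Z, union_mem_disjointCE hX hZ, hXc.union hZc, by rwa [empty_union]⟩

theorem coversDisjointly_of_computableSet (hX : ComputableSet X) : CoversDisjointly A X := by
  intro D hD
  refine ⟨D \ X, ⟨hD.1.diff_computableSet hX, hD.2.mono_left sdiff_subset⟩,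
    disjoint_sdiff_left, subsetStar_of_subset (sdiff_subset_iff.1 subset_rfl)⟩

theorem CoversComputably.exists_pieces (h : CoversComputably A X) (hX : X ∈ disjointCE A) :
    ∃ R : ℕ → Set ℕ, (∀ k, R k ∈ disjointCE A ∧ ComputableSet (R k)) ∧
      Pairwise (Disjoint on R) ∧ Generates A (insert X (range R)) := by
  obtain ⟨e, he⟩ := exists_range_eq_disjointCE A
  have hcov k := h (e k) (he ▸ mem_range_self k)
  choose W hW hWc hWe using hcov
  have hR k : disjointed W k ∈ disjointCE A ∧ ComputableSet (disjointed W k) :=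
    ⟨⟨disjointedRec (fun _ _ ht => ht.diff_computableSet (hWc _)) (hW k).1,
        (hW k).2.mono_left (disjointed_subset W k)⟩,
      disjointedRec (fun _ _ ht => ht.diff (hWc _)) (hWc k)⟩
  have hGW : Generates A (range fun k => X ∪ W k) := by
    refine generates_range (fun k => union_mem_disjointCE hX (hW k)) fun D hD => ?_
    obtain ⟨k, rfl⟩ := he.symm ▸ hD
    exact ⟨k, hWe k⟩
  refine ⟨disjointed W, hR, disjoint_disjointed W, hGW.of_refines
    ((countable_range _).insert X) (insert_subset hX (range_subset_iff.2 fun k => (hR k).1)) ?_⟩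
  rintro _ ⟨k, rfl⟩
  refine ⟨insert X (disjointed W '' Iic k), insert_subset_insert (image_subset_range _ _),
    ((finite_Iic k).image _).insert X, subsetStar_of_subset ?_⟩
  have hWk : W k ⊆ ⋃ i ∈ Finset.Iic k, disjointed W i :=
    (le_partialSups W k).trans (biUnion_Iic_disjointed W k).ge
  simpa only [sUnion_insert, sUnion_image, mem_Iic, Finset.mem_Iic] using
    union_subset_union_right X hWk

end Covers

section Chains

variable {A : Set ℕ}

theorem exists_pieces_of_forall_coversDisjointly {B : Set ℕ} (hB : B ∈ disjointCE A)
    (h : ∀ X ∈ disjointCE A, B ⊆ X → CoversDisjointly A X) :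
    ∃ Z : ℕ → Set ℕ, (∀ k, Z k ∈ disjointCE A ∧ Disjoint (Z k) B) ∧ Pairwise (Disjoint on Z) ∧
      Generates A (insert B (range Z)) := by
  obtain ⟨e, he⟩ := exists_range_eq_disjointCE A
  have step (X : Set ℕ) (k : ℕ) : ∃ Z, X ∈ disjointCE A → B ⊆ X →
      Z ∈ disjointCE A ∧ Disjoint Z X ∧ SubsetStar (e k) (X ∪ Z) := by
    by_cases hX : X ∈ disjointCE A ∧ B ⊆ X
    · obtain ⟨Z, hZ, hZX, hcov⟩ := h X hX.1 hX.2 (e k) (he ▸ mem_range_self k)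
      exact ⟨Z, fun _ _ => ⟨hZ, hZX, hcov⟩⟩
    · exact ⟨∅, fun h1 h2 => absurd ⟨h1, h2⟩ hX⟩
  choose next hnext using step
  let X : ℕ → Set ℕ := fun k => Nat.rec B (fun k Xk => Xk ∪ next Xk k) k
  have hX k : X k ∈ disjointCE A ∧ B ⊆ X k := by
    induction k with
    | zero => exact ⟨hB, subset_rfl⟩
    | succ k ih =>
      exact ⟨union_mem_disjointCE ih.1 (hnext _ k ih.1 ih.2).1, ih.2.trans subset_union_left⟩
  let Z k := next (X k) k
  have hZ k : Z k ∈ disjointCE A ∧ Disjoint (Z k) (X k) ∧ SubsetStar (e k) (X (k + 1)) :=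
    hnext (X k) k (hX k).1 (hX k).2
  have hXmono : Monotone X := monotone_nat_of_le_succ fun k => subset_union_left
  have hXZ k : X k ⊆ B ∪ ⋃ j ∈ Iio k, Z j := by
    induction k with
    | zero => exact subset_union_left
    | succ k ih =>
      refine union_subset (ih.trans (union_subset_union_right B ?_)) ?_
      · exact biUnion_mono (Iio_subset_Iio k.le_succ) fun _ _ => subset_rfl
      · exact (subset_biUnion_of_mem (u := Z) (show k ∈ Iio (k + 1) from k.lt_succ_self)).trans
          subset_union_right
  have hGX : Generates A (range fun k => X (k + 1)) :=
    generates_range (fun k => (hX (k + 1)).1) fun D hD => by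
      obtain ⟨k, rfl⟩ := he.symm ▸ hD
      exact ⟨k, (hZ k).2.2⟩
  refine ⟨Z, fun k => ⟨(hZ k).1, (hZ k).2.1.mono_right (hX k).2⟩,
    (pairwise_disjoint_on Z).2 fun i j hij =>
      (hZ j).2.1.symm.mono_left (subset_union_right.trans (hXmono (Nat.succ_le_of_lt hij))),
    hGX.of_refines ((countable_range Z).insert B)
      (insert_subset hB (range_subset_iff.2 fun k => (hZ k).1)) ?_⟩
  rintro _ ⟨k, rfl⟩
  refine ⟨insert B (Z '' Iio (k + 1)), insert_subset_insert (image_subset_range _ _),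
    ((finite_Iio _).image Z).insert B, subsetStar_of_subset ?_⟩
  simpa only [sUnion_insert, sUnion_image] using hXZ (k + 1)

theorem exists_type10_of_forall_not_coversDisjointly
    (h : ∀ B ∈ disjointCE A, ∃ X ∈ disjointCE A, B ⊆ X ∧ ¬ CoversDisjointly A X) :
    ∃ G, Generates A G ∧ IsType10 G := by
  obtain ⟨e, he⟩ := exists_range_eq_disjointCE A
  -- `C` contains a witness against `X`, so `X` does not cover `C` disjointly either.
  have step (X : Set ℕ) (k : ℕ) : ∃ C, X ∈ disjointCE A → ¬ CoversDisjointly A X →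
      C ∈ disjointCE A ∧ ¬ CoversDisjointly A C ∧ X ⊆ C ∧ e k ⊆ C ∧
      ∀ Z ∈ disjointCE A, Disjoint Z X → ¬ SubsetStar C (X ∪ Z) := by
    by_cases hX : X ∈ disjointCE A ∧ ¬ CoversDisjointly A X
    · obtain ⟨hX, hXcov⟩ := hX
      simp only [CoversDisjointly, not_forall, not_exists, not_and] at hXcov
      obtain ⟨Y, hY, hYX⟩ := hXcov
      obtain ⟨C, hC, hXYeC, hCcov⟩ :=
        h (X ∪ Y ∪ e k) (union_mem_disjointCE (union_mem_disjointCE hX hY) (he ▸ mem_range_self k))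
      refine ⟨C, fun _ _ => ⟨hC, hCcov, fun x hx => hXYeC (Or.inl (Or.inl hx)),
        fun x hx => hXYeC (Or.inr hx), fun Z hZ hZX hCZ => hYX Z hZ hZX ?_⟩⟩
      exact (subsetStar_of_subset fun x hx => hXYeC (Or.inl (Or.inr hx))).trans hCZ
    · exact ⟨∅, fun h1 h2 => absurd ⟨h1, h2⟩ hX⟩
  choose next hnext using step
  obtain ⟨C₀, hC₀, -, hC₀cov⟩ := h ∅ (empty_mem_disjointCE A)
  let D : ℕ → Set ℕ := fun l => Nat.rec C₀ (fun l X => next X l) l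
  have hD l : D l ∈ disjointCE A ∧ ¬ CoversDisjointly A (D l) := by
    induction l with
    | zero => exact ⟨hC₀, hC₀cov⟩
    | succ l ih => exact ⟨(hnext _ l ih.1 ih.2).1, (hnext _ l ih.1 ih.2).2.1⟩
  have hDsucc l := hnext (D l) l (hD l).1 (hD l).2
  have hDnc l : ¬ ComputableSet (D l) := fun hc => (hD l).2 (coversDisjointly_of_computableSet hc)
  refine ⟨range D, generates_range (fun l => (hD l).1) fun E hE => ?_, D, rfl,
    fun l => ⟨(hD l).1.1, hDnc l, infinite_of_not_computableSet (hDnc l)⟩,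
    fun l => (hDsucc l).2.2.1, fun l hce => ?_⟩
  · obtain ⟨k, rfl⟩ := he.symm ▸ hE
    exact ⟨k + 1, subsetStar_of_subset (hDsucc k).2.2.2.1⟩
  · refine (hDsucc l).2.2.2.2 (D (l + 1) \ D l) ⟨hce, (hD (l + 1)).1.2.mono_left sdiff_subset⟩
      disjoint_sdiff_left (subsetStar_of_subset (sdiff_subset_iff.1 subset_rfl))

end Chains

theorem Pairwise.injective_of_nonempty {ι α : Type*} {Z : ι → Set α}
    (h : Pairwise (Disjoint on Z)) (hne : ∀ i, (Z i).Nonempty) : Injective Z :=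
  pairwise_ne_iff_injective.1 <| h.mono fun i _ hij hZ =>
    (hne i).ne_empty <| disjoint_self.1 (by simpa only [onFun, hZ] using hij)

theorem range_comp_nth {α : Type*} {s : Set ℕ} (hs : s.Infinite) (P : ℕ → α) :
    range (P ∘ Nat.nth (· ∈ s)) = P '' s := by
  rw [range_comp, Nat.range_nth_of_infinite (p := (· ∈ s)) hs]
  rfl

section Types

variable {A : Set ℕ}

theorem Generates.insert_sUnion_image {X : Set ℕ} {P : ℕ → Set ℕ} {s : Set ℕ}
    (hG : Generates A (insert X (range P))) (hs : sᶜ.Finite) :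
    Generates A (insert (X ∪ ⋃₀ (P '' sᶜ)) (P '' s)) := by
  have hGA := (generates_iff.1 hG).2.1
  have hP j : P j ∈ disjointCE A := hGA (mem_insert_of_mem _ (mem_range_self j))
  refine hG.of_finite_or_subset ((s.to_countable.image P).insert _)
    (insert_subset (union_mem_disjointCE (hGA (mem_insert _ _))
      (sUnion_mem_disjointCE (hs.image P) (image_subset_iff.2 fun j _ => hP j)))
      (image_subset_iff.2 fun j _ => hP j)) ?_
  rintro Y (rfl | ⟨j, rfl⟩)
  · exact Or.inr ⟨_, mem_insert _ _, subset_union_left⟩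
  by_cases hj : j ∈ s
  · exact Or.inr ⟨P j, mem_insert_of_mem _ (mem_image_of_mem P hj), subset_rfl⟩
  · exact Or.inr ⟨_, mem_insert _ _,
      (subset_sUnion_of_mem (mem_image_of_mem P hj)).trans subset_union_right⟩

theorem exists_type1_or_type2_or_type3 {M : Set ℕ} (hM : Generates A {M}) :
    ∃ G, Generates A G ∧ (IsType1 G ∨ IsType2 G ∨ IsType3 G) := by
  by_cases hfin : M.Finite
  · refine ⟨{∅}, hM.of_finite_or_subset (countable_singleton _)
      (singleton_subset_iff.2 (empty_mem_disjointCE A)) ?_, Or.inl rfl⟩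
    rintro X rfl
    exact Or.inl hfin
  by_cases hc : ComputableSet M
  · exact ⟨{M}, hM, Or.inr (Or.inl ⟨M, rfl, hc, hfin⟩)⟩
  · exact ⟨{M}, hM, Or.inr (Or.inr ⟨M, rfl, ((generates_iff.1 hM).2.1 rfl).1, hc, hfin⟩)⟩

theorem exists_type4 (hmax : ∀ M, ¬ Generates A {M}) {X : Set ℕ} (hX : X ∈ disjointCE A)
    (hXc : ComputableSet X) (hcov : CoversComputably A X) : ∃ G, Generates A G ∧ IsType4 G := by
  obtain ⟨R, hR, hRdis, hG⟩ :=
    (hcov.empty_of_computableSet hX hXc).exists_pieces (empty_mem_disjointCE A)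
  obtain ⟨f, hf, hRf, hGf⟩ := hG.exists_infinite_subfamily hmax
  have hRfdis : Pairwise (Disjoint on R ∘ f) := hRdis.comp_of_injective hf
  refine ⟨range (R ∘ f), hGf.of_finite_or_subset (countable_range _)
    ((subset_insert _ _).trans (generates_iff.1 hGf).2.1) ?_, R ∘ f, rfl,
    hRfdis.injective_of_nonempty fun j => (hRf j).nonempty, fun j => ⟨(hR _).2, hRf j⟩, hRfdis⟩
  rintro Y (rfl | hY)
  exacts [Or.inl finite_empty, Or.inr ⟨Y, hY, subset_rfl⟩]

theorem exists_type5_or_type7 (hmax : ∀ M, ¬ Generates A {M}) {X : Set ℕ}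
    (hX : X ∈ disjointCE A) (hcov : CoversComputably A X)
    (hnc : ∀ Y ∈ disjointCE A, CoversComputably A Y → ¬ ComputableSet Y) :
    ∃ G, Generates A G ∧ (IsType5 G ∨ IsType7 G) := by
  obtain ⟨R, hR, hRdis, hG⟩ := hcov.exists_pieces hX
  obtain ⟨f, hf, hRf, hGf⟩ := hG.exists_infinite_subfamily hmax
  set P := R ∘ f
  have hP j : P j ∈ disjointCE A ∧ ComputableSet (P j) := hR (f j)
  have hPdis : Pairwise (Disjoint on P) := hRdis.comp_of_injective hf
  have hPinj : Injective P := hPdis.injective_of_nonempty fun j => (hRf j).nonempty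
  by_cases hmeet : {j | (X ∩ P j).Nonempty}.Infinite
  · exact ⟨_, hGf, Or.inr ⟨X, P, rfl, hX.1, hnc X hX hcov, hPinj,
      fun j h => hnc X hX hcov (h ▸ (hP j).2), fun j => ⟨(hP j).2, hRf j⟩, hPdis, hmeet⟩⟩
  set s := {j | ¬ (X ∩ P j).Nonempty}
  have hsc : sᶜ.Finite := by simpa [s, compl_ofPred] using hmeet
  have hs : s.Infinite := by simpa using hsc.infinite_compl
  set D₀ := X ∪ ⋃₀ (P '' sᶜ)
  have hGD : Generates A (insert D₀ (range (P ∘ Nat.nth (· ∈ s)))) := by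
    rw [range_comp_nth hs]
    exact hGf.insert_sUnion_image hsc
  have hD₀ : D₀ ∈ disjointCE A := (generates_iff.1 hGD).2.1 (mem_insert _ _)
  have hD₀nc : ¬ ComputableSet D₀ := hnc D₀ hD₀ <| hGD.coversComputably <| by
    rintro _ (rfl | ⟨c, rfl⟩) hne
    exacts [absurd rfl hne, (hP _).2]
  have hD₀R c : Disjoint D₀ (P (Nat.nth (· ∈ s) c)) := by
    have hc : Nat.nth (· ∈ s) c ∈ s := Nat.nth_mem_of_infinite hs c
    refine disjoint_union_left.2 ⟨disjoint_iff_inter_eq_empty.2 (not_nonempty_iff_eq_empty.1 hc),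
      disjoint_sUnion_left.2 ?_⟩
    rintro _ ⟨j, hj, rfl⟩
    exact hPdis fun h => hj (h ▸ hc)
  exact ⟨_, hGD, Or.inl ⟨D₀, _, rfl, hD₀.1, hD₀nc, infinite_of_not_computableSet hD₀nc,
    hPinj.comp (Nat.nth_injective hs), fun c h => hD₀nc (h ▸ (hP _).2), fun c => ⟨(hP _).2, hRf _⟩,
    hPdis.comp_of_injective (Nat.nth_injective hs), hD₀R⟩⟩

theorem exists_absorb_of_not_computableSet {S : Set ℕ} {N : ℕ → Set ℕ} (hS : S ∈ disjointCE A)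
    (hN : ∀ t, N t ∈ disjointCE A ∧ ¬ ComputableSet (N t)) (hNdis : Pairwise (Disjoint on N))
    (hSN : ∀ t, Disjoint S (N t)) (hS0 : ¬ ComputableSet (S ∪ N 0)) :
    ∃ D : ℕ → Set ℕ, (∀ k, D k ∈ disjointCE A ∧ ¬ ComputableSet (D k)) ∧
      Pairwise (Disjoint on D) ∧ S ⊆ D 0 ∧ ∀ t, ∃ k, N t ⊆ D k := by
  refine ⟨fun k => if k = 0 then S ∪ N 0 else N k, fun k => ?_, fun i j hij => ?_,
    by simp, fun t => ⟨t, by dsimp only; split_ifs with ht <;> simp [ht]⟩⟩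
  · dsimp only
    split_ifs
    exacts [⟨union_mem_disjointCE hS (hN 0).1, hS0⟩, hN k]
  · simp only [onFun]
    split_ifs with hi hj hj
    · exact absurd (hi.trans hj.symm) hij
    · exact disjoint_union_left.2 ⟨hSN j, hNdis (hi ▸ hij)⟩
    · exact disjoint_union_right.2 ⟨(hSN i).symm, hNdis (hj ▸ hij)⟩
    · exact hNdis hij

theorem exists_absorb {S : Set ℕ} {N : ℕ → Set ℕ} (hS : S ∈ disjointCE A)
    (hN : ∀ t, N t ∈ disjointCE A ∧ ¬ ComputableSet (N t)) (hNdis : Pairwise (Disjoint on N))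
    (hSN : ∀ t, Disjoint S (N t)) :
    ∃ D : ℕ → Set ℕ, (∀ k, D k ∈ disjointCE A ∧ ¬ ComputableSet (D k)) ∧
      Pairwise (Disjoint on D) ∧ S ⊆ D 0 ∧ ∀ t, ∃ k, N t ⊆ D k := by
  by_cases hS0 : ComputableSet (S ∪ N 0)
  swap
  · exact exists_absorb_of_not_computableSet hS hN hNdis hSN hS0
  have hS01 : ¬ ComputableSet (S ∪ N 0 ∪ N 1) := not_computableSet_union hS0 (hN 1).2
    (disjoint_union_left.2 ⟨hSN 1, hNdis zero_ne_one⟩)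
  obtain ⟨D, hD, hDdis, hSD, hND⟩ := exists_absorb_of_not_computableSet
    (union_mem_disjointCE hS (hN 0).1) (fun t => hN (t + 1))
    (hNdis.comp_of_injective (add_left_injective 1))
    (fun t => disjoint_union_left.2 ⟨hSN _, hNdis (Nat.succ_ne_zero t).symm⟩) hS01
  refine ⟨D, hD, hDdis, subset_union_left.trans hSD, fun t => ?_⟩
  cases t with
  | zero => exact ⟨0, subset_union_right.trans hSD⟩
  | succ t => exact hND t

theorem exists_type6 {B : Set ℕ} {P : ℕ → Set ℕ}
    (hP : ∀ j, P j ∈ disjointCE A ∧ Disjoint B (P j)) (hPdis : Pairwise (Disjoint on P))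
    (hG : Generates A (insert B (range P))) (hs : {j | ¬ ComputableSet (P j)}.Infinite)
    (hsc : {j | ¬ ComputableSet (P j)}ᶜ.Finite) : ∃ G, Generates A G ∧ IsType6 G := by
  set s := {j | ¬ ComputableSet (P j)}
  set S := B ∪ ⋃₀ (P '' sᶜ)
  set N := P ∘ Nat.nth (· ∈ s)
  have hGS : Generates A (insert S (range N)) := by
    rw [range_comp_nth hs]
    exact hG.insert_sUnion_image hsc
  have hSN t : Disjoint S (N t) := by
    have ht : Nat.nth (· ∈ s) t ∈ s := Nat.nth_mem_of_infinite hs t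
    refine disjoint_union_left.2 ⟨(hP _).2, disjoint_sUnion_left.2 ?_⟩
    rintro _ ⟨j, hj, rfl⟩
    exact hPdis fun h => hj (h ▸ ht)
  obtain ⟨D, hD, hDdis, hSD, hND⟩ := exists_absorb ((generates_iff.1 hGS).2.1 (mem_insert _ _))
    (fun t => ⟨(hP _).1, Nat.nth_mem_of_infinite hs t⟩)
    (hPdis.comp_of_injective (Nat.nth_injective hs)) hSN
  have hDinf k : (D k).Infinite := infinite_of_not_computableSet (hD k).2
  refine ⟨range D, hGS.of_finite_or_subset (countable_range D)
    (range_subset_iff.2 fun k => (hD k).1) ?_, D, rfl,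
    hDdis.injective_of_nonempty fun k => (hDinf k).nonempty,
    fun k => ⟨(hD k).1.1, (hD k).2, hDinf k⟩, hDdis⟩
  rintro _ (rfl | ⟨t, rfl⟩)
  · exact Or.inr ⟨D 0, mem_range_self 0, hSD⟩
  · obtain ⟨k, hk⟩ := hND t
    exact Or.inr ⟨D k, mem_range_self k, hk⟩

theorem exists_type8 {B : Set ℕ} {P : ℕ → Set ℕ} (hB : B ∈ disjointCE A)
    (hP : ∀ j, P j ∈ disjointCE A ∧ Disjoint B (P j) ∧ (P j).Infinite)
    (hPdis : Pairwise (Disjoint on P)) (hG : Generates A (insert B (range P)))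
    (hs : {j | ¬ ComputableSet (P j)}.Infinite) (hsc : {j | ¬ ComputableSet (P j)}ᶜ.Infinite) :
    ∃ G, Generates A G ∧ IsType8 G := by
  set s := {j | ¬ ComputableSet (P j)}
  set N := P ∘ Nat.nth (· ∈ s)
  set R := P ∘ Nat.nth (· ∈ sᶜ)
  obtain ⟨D, hD, hDdis, hBD, hND⟩ := exists_absorb hB
    (fun t => ⟨(hP _).1, Nat.nth_mem_of_infinite hs t⟩)
    (hPdis.comp_of_injective (Nat.nth_injective hs)) fun t => (hP _).2.1
  have hDinf k : (D k).Infinite := infinite_of_not_computableSet (hD k).2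
  have hRc c : ComputableSet (R c) := not_not.1 (Nat.nth_mem_of_infinite hsc c)
  have hRdis : Pairwise (Disjoint on R) := hPdis.comp_of_injective (Nat.nth_injective hsc)
  refine ⟨range D ∪ range R, hG.of_finite_or_subset ((countable_range D).union (countable_range R))
    (union_subset (range_subset_iff.2 fun k => (hD k).1) (range_subset_iff.2 fun c => (hP _).1)) ?_,
    D, R, rfl, hDdis.injective_of_nonempty fun k => (hDinf k).nonempty,
    hRdis.injective_of_nonempty fun c => (hP _).2.2.nonempty, fun k c h => (hD k).2 (h ▸ hRc c),
    fun k => ⟨(hD k).1.1, (hD k).2⟩, hDdis, fun c => ⟨hRc c, (hP _).2.2⟩, hRdis⟩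
  rintro _ (rfl | ⟨j, rfl⟩)
  · exact Or.inr ⟨D 0, Or.inl (mem_range_self 0), hBD⟩
  by_cases hj : j ∈ s
  · obtain ⟨t, ht⟩ : P j ∈ range N := (range_comp_nth hs P).symm ▸ mem_image_of_mem P hj
    obtain ⟨k, hk⟩ := hND t
    exact Or.inr ⟨D k, Or.inl (mem_range_self k), ht ▸ hk⟩
  · exact Or.inr ⟨P j, Or.inr ((range_comp_nth hsc P).symm ▸ mem_image_of_mem P hj), subset_rfl⟩

theorem exists_type6_or_type8 (hmax : ∀ M, ¬ Generates A {M})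
    (hnc : ∀ Y ∈ disjointCE A, ¬ CoversComputably A Y) {B : Set ℕ} (hB : B ∈ disjointCE A)
    (h : ∀ X ∈ disjointCE A, B ⊆ X → CoversDisjointly A X) :
    ∃ G, Generates A G ∧ (IsType6 G ∨ IsType8 G) := by
  obtain ⟨Z, hZ, hZdis, hG⟩ := exists_pieces_of_forall_coversDisjointly hB h
  obtain ⟨f, hf, hZf, hGf⟩ := hG.exists_infinite_subfamily hmax
  set P := Z ∘ f
  have hP j : P j ∈ disjointCE A ∧ Disjoint B (P j) ∧ (P j).Infinite :=
    ⟨(hZ _).1, (hZ _).2.symm, hZf j⟩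
  have hPdis : Pairwise (Disjoint on P) := hZdis.comp_of_injective hf
  set s := {j | ¬ ComputableSet (P j)}
  have hs : s.Infinite := by
    intro hfin
    have hGS := hGf.insert_sUnion_image (s := sᶜ) (by simpa using hfin)
    refine hnc _ ((generates_iff.1 hGS).2.1 (mem_insert _ _)) (hGS.coversComputably ?_)
    rintro _ (rfl | ⟨j, hj, rfl⟩) hne
    exacts [absurd rfl hne, not_not.1 hj]
  by_cases hsc : sᶜ.Finite
  · obtain ⟨G, hG6, h6⟩ := exists_type6 (fun j => ⟨(hP j).1, (hP j).2.1⟩) hPdis hGf hs hsc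
    exact ⟨G, hG6, Or.inl h6⟩
  · obtain ⟨G, hG8, h8⟩ := exists_type8 hB hP hPdis hGf hs hsc
    exact ⟨G, hG8, Or.inr h8⟩

end Types

theorem stmt_6_general (A : Set ℕ) :
    ∃ (G : Set (Set ℕ)) (n : ℕ), 1 ≤ n ∧ n ≤ 10 ∧ Generates A G ∧ GenTypeN n G := by
  by_cases hmax : ∃ M, Generates A {M}
  · obtain ⟨M, hM⟩ := hmax
    obtain ⟨G, hG, h1 | h2 | h3⟩ := exists_type1_or_type2_or_type3 hM
    exacts [⟨G, 1, le_rfl, by norm_num, hG, h1⟩, ⟨G, 2, by norm_num, by norm_num, hG, h2⟩,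
      ⟨G, 3, by norm_num, by norm_num, hG, h3⟩]
  push Not at hmax
  by_cases hcomp : ∃ X ∈ disjointCE A, ComputableSet X ∧ CoversComputably A X
  · obtain ⟨X, hX, hXc, hcov⟩ := hcomp
    obtain ⟨G, hG, h4⟩ := exists_type4 hmax hX hXc hcov
    exact ⟨G, 4, by norm_num, by norm_num, hG, h4⟩
  by_cases hcov : ∃ X ∈ disjointCE A, CoversComputably A X
  · obtain ⟨X, hX, hcov⟩ := hcov
    obtain ⟨G, hG, h5 | h7⟩ := exists_type5_or_type7 hmax hX hcov fun Y hY hYcov hYc =>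
      hcomp ⟨Y, hY, hYc, hYcov⟩
    exacts [⟨G, 5, by norm_num, by norm_num, hG, h5⟩, ⟨G, 7, by norm_num, by norm_num, hG, h7⟩]
  push Not at hcov
  by_cases hdis : ∃ B ∈ disjointCE A, ∀ X ∈ disjointCE A, B ⊆ X → CoversDisjointly A X
  · obtain ⟨B, hB, hBcov⟩ := hdis
    obtain ⟨G, hG, h6 | h8⟩ := exists_type6_or_type8 hmax hcov hB hBcov
    exacts [⟨G, 6, by norm_num, by norm_num, hG, h6⟩, ⟨G, 8, by norm_num, by norm_num, hG, h8⟩]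
  push Not at hdis
  obtain ⟨G, hG, h10⟩ := exists_type10_of_forall_not_coversDisjointly hdis
  exact ⟨G, 10, by norm_num, le_rfl, hG, h10⟩

theorem stmt_6 (A : Set ℕ) (hA : CESet A) :
    ∃ (G : Set (Set ℕ)) (n : ℕ), 1 ≤ n ∧ n ≤ 10 ∧ Generates A G ∧ GenTypeN n G :=
  stmt_6_general A
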